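/- arXiv:2311.10297 — 8 statements merged into one kernel-verified Lean document; each statement's English description precedes it below -/
import Mathlib

section
/- Let Y_1, ..., Y_k and X be random variables on finite sets, and let S_h be a collection of subsets of {1,...,k} such that every element of {1,...,k} is contained in exactly h members of S_h. Then the sum over S in S_h of the conditional entropies H(Y_S | X) is at least h · H(Y_{[k]} | X), where Y_S denotes the tuple (Y_s)_{s in S}. -/
open Finset

/-- Conditional Shannon entropy (base 2) of `f` given `g`, for a finite probability
space with mass function `p`. -/
noncomputable def condEnt {Ω α β : Type*} [Fintype Ω] [Fintype α] [Fintype β]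
    [DecidableEq α] [DecidableEq β] (p : Ω → ℝ) (f : Ω → α) (g : Ω → β) : ℝ :=
  ∑ a : α, ∑ b : β,
    -((∑ ω : Ω, if f ω = a ∧ g ω = b then p ω else 0) *
      Real.logb 2 ((∑ ω : Ω, if f ω = a ∧ g ω = b then p ω else 0) /
        (∑ ω : Ω, if g ω = b then p ω else 0)))

set_option linter.unusedSectionVars false

namespace ShearerAux
open Real

variable {Ω α β γ α' β' : Type*} [Fintype Ω] [Fintype α] [Fintype β] [Fintype γ]
  [Fintype α'] [Fintype β']
  [DecidableEq α] [DecidableEq β] [DecidableEq γ] [DecidableEq α'] [DecidableEq β']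

/-- mass of the fiber -/
noncomputable def qq (p : Ω → ℝ) (f : Ω → α) (a : α) : ℝ :=
  ∑ ω, if f ω = a then p ω else 0

/-- entropy summand -/
noncomputable def T (x y : ℝ) : ℝ := -(x * Real.logb 2 (x / y))

lemma T_zero (y : ℝ) : T 0 y = 0 := by simp [T]

lemma condEnt_eq (p : Ω → ℝ) (f : Ω → α) (g : Ω → β) :
    condEnt p f g = ∑ a : α, ∑ b : β,
      T (qq p (fun ω => (f ω, g ω)) (a, b)) (qq p g b) := by
  unfold condEnt T qq
  congr 1; ext a; congr 1; ext b
  have : ∀ ω : Ω, ((f ω, g ω) = (a, b)) = (f ω = a ∧ g ω = b) := by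
    intro ω; simp [Prod.ext_iff]
  simp only [this]

lemma qq_nonneg (p : Ω → ℝ) (hp0 : ∀ ω, 0 ≤ p ω) (f : Ω → α) (a : α) : 0 ≤ qq p f a :=
  Finset.sum_nonneg fun ω _ => by split_ifs; exacts [hp0 ω, le_refl 0]

lemma sum_qq (p : Ω → ℝ) (f : Ω → α) : ∑ a, qq p f a = ∑ ω, p ω := by
  unfold qq
  rw [Finset.sum_comm]
  refine Finset.sum_congr rfl fun ω _ => ?_
  rw [Finset.sum_ite_eq Finset.univ (f ω) (fun _ => p ω)]
  simp

lemma qq_pair_snd (p : Ω → ℝ) (f : Ω → α) (g : Ω → β) (b : β) :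
    ∑ a, qq p (fun ω => (f ω, g ω)) (a, b) = qq p g b := by
  unfold qq
  rw [Finset.sum_comm]
  refine Finset.sum_congr rfl fun ω _ => ?_
  by_cases hg : g ω = b
  · simp only [Prod.ext_iff, hg, and_true]
    rw [Finset.sum_ite_eq Finset.univ (f ω) (fun _ => p ω)]
    simp [hg]
  · simp [Prod.ext_iff, hg]

lemma qq_pair_fst (p : Ω → ℝ) (f : Ω → α) (g : Ω → β) (a : α) :
    ∑ b, qq p (fun ω => (f ω, g ω)) (a, b) = qq p f a := by
  unfold qq
  rw [Finset.sum_comm]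
  refine Finset.sum_congr rfl fun ω _ => ?_
  by_cases hf : f ω = a
  · simp only [Prod.ext_iff, hf, true_and]
    rw [Finset.sum_ite_eq Finset.univ (g ω) (fun _ => p ω)]
    simp [hf]
  · simp [Prod.ext_iff, hf]

lemma qq_pair_le_snd (p : Ω → ℝ) (hp0 : ∀ ω, 0 ≤ p ω) (f : Ω → α) (g : Ω → β) (a : α) (b : β) :
    qq p (fun ω => (f ω, g ω)) (a, b) ≤ qq p g b := by
  rw [← qq_pair_snd p f g b]
  exact Finset.single_le_sum (f := fun a' => qq p (fun ω => (f ω, g ω)) (a', b))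
    (fun a' _ => qq_nonneg p hp0 _ _) (Finset.mem_univ a)

lemma T_nonneg {x y : ℝ} (hx : 0 ≤ x) (hxy : x ≤ y) : 0 ≤ T x y := by
  rcases eq_or_lt_of_le hx with h | h
  · simp [T, ← h]
  · have hy : 0 < y := lt_of_lt_of_le h hxy
    have : x / y ≤ 1 := (div_le_one hy).2 hxy
    have hlog : Real.logb 2 (x / y) ≤ 0 :=
      Real.logb_nonpos (by norm_num) (le_of_lt (div_pos h hy)) this
    have := mul_nonpos_of_nonneg_of_nonpos hx hlog
    simp [T]; linarith

lemma condEnt_nonneg (p : Ω → ℝ) (hp0 : ∀ ω, 0 ≤ p ω) (f : Ω → α) (g : Ω → β) :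
    0 ≤ condEnt p f g := by
  rw [condEnt_eq]
  refine Finset.sum_nonneg fun a _ => Finset.sum_nonneg fun b _ => ?_
  exact T_nonneg (qq_nonneg p hp0 _ _) (qq_pair_le_snd p hp0 f g a b)

lemma condEnt_subsingleton (p : Ω → ℝ) [Subsingleton α] (f : Ω → α) (g : Ω → β) :
    condEnt p f g = 0 := by
  rw [condEnt_eq]
  refine Finset.sum_eq_zero fun a _ => Finset.sum_eq_zero fun b _ => ?_
  have hq : qq p (fun ω => (f ω, g ω)) (a, b) = qq p g b := by
    unfold qq
    refine Finset.sum_congr rfl fun ω _ => ?_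
    have : f ω = a := Subsingleton.elim _ _
    simp [Prod.ext_iff, this]
  rw [hq]
  rcases eq_or_ne (qq p g b) 0 with h | h
  · simp [T, h]
  · simp [T, div_self h]

lemma T_chain {x y z : ℝ} (hx : 0 ≤ x) (hxy : x ≤ y) (hyz : y ≤ z) :
    T x z - T x y = -(x * Real.logb 2 (y / z)) := by
  rcases eq_or_lt_of_le hx with h | h
  · simp [T, ← h]
  · have hy : 0 < y := lt_of_lt_of_le h hxy
    have hz : 0 < z := lt_of_lt_of_le hy hyz
    have : Real.logb 2 (x / z) - Real.logb 2 (x / y) = Real.logb 2 (y / z) := by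
      unfold Real.logb
      rw [Real.log_div (ne_of_gt h) (ne_of_gt hz), Real.log_div (ne_of_gt h) (ne_of_gt hy),
        Real.log_div (ne_of_gt hy) (ne_of_gt hz)]
      ring
    unfold T
    nlinarith [this]

lemma condEnt_chain (p : Ω → ℝ) (hp0 : ∀ ω, 0 ≤ p ω)
    (f : Ω → α) (g : Ω → β) (h : Ω → γ) :
    condEnt p (fun ω => (f ω, g ω)) h
      = condEnt p g h + condEnt p f (fun ω => (g ω, h ω)) := by
  set q3 : α → β → γ → ℝ := fun a b c => qq p (fun ω => (f ω, (g ω, h ω))) (a, (b, c)) with hq3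
  set q2 : β → γ → ℝ := fun b c => qq p (fun ω => (g ω, h ω)) (b, c) with hq2
  set q1 : γ → ℝ := fun c => qq p h c with hq1
  have hLHS : condEnt p (fun ω => (f ω, g ω)) h
      = ∑ a : α, ∑ b : β, ∑ c : γ, T (q3 a b c) (q1 c) := by
    rw [condEnt_eq, Fintype.sum_prod_type]
    refine Finset.sum_congr rfl fun a _ => Finset.sum_congr rfl fun b _ =>
      Finset.sum_congr rfl fun c _ => ?_
    congr 1
    unfold qq
    refine Finset.sum_congr rfl fun ω _ => ?_
    simp [Prod.ext_iff, and_assoc]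
  have hRHS2 : condEnt p f (fun ω => (g ω, h ω))
      = ∑ a : α, ∑ b : β, ∑ c : γ, T (q3 a b c) (q2 b c) := by
    rw [condEnt_eq]
    refine Finset.sum_congr rfl fun a _ => ?_
    rw [Fintype.sum_prod_type]
  have hRHS1 : condEnt p g h = ∑ b : β, ∑ c : γ, T (q2 b c) (q1 c) := condEnt_eq p g h
  rw [hLHS, hRHS1, hRHS2]
  rw [Finset.sum_comm (γ := α)]
  have swap2 : ∀ a : α, ∑ b : β, ∑ c : γ, T (q3 a b c) (q2 b c)
      = ∑ b : β, ∑ c : γ, T (q3 a b c) (q2 b c) := fun _ => rfl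
  rw [show (∑ a : α, ∑ b : β, ∑ c : γ, T (q3 a b c) (q2 b c))
      = ∑ b : β, ∑ c : γ, ∑ a : α, T (q3 a b c) (q2 b c) from Finset.sum_comm.trans
        (Finset.sum_congr rfl fun b _ => Finset.sum_comm)]
  rw [show (∑ b : β, ∑ a : α, ∑ c : γ, T (q3 a b c) (q1 c))
      = ∑ b : β, ∑ c : γ, ∑ a : α, T (q3 a b c) (q1 c) from
        Finset.sum_congr rfl fun b _ => Finset.sum_comm]
  rw [← Finset.sum_add_distrib]
  refine Finset.sum_congr rfl fun b _ => ?_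
  rw [← Finset.sum_add_distrib]
  refine Finset.sum_congr rfl fun c _ => ?_
  have hmarg : ∑ a : α, q3 a b c = q2 b c := qq_pair_snd p f (fun ω => (g ω, h ω)) (b, c)
  have hq3le : ∀ a, q3 a b c ≤ q2 b c := fun a =>
    qq_pair_le_snd p hp0 f (fun ω => (g ω, h ω)) a (b, c)
  have hq2le : q2 b c ≤ q1 c := qq_pair_le_snd p hp0 g h b c
  have hterm : ∀ a, T (q3 a b c) (q1 c)
      = T (q3 a b c) (q2 b c) + -(q3 a b c * Real.logb 2 (q2 b c / q1 c)) := by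
    intro a
    have := T_chain (qq_nonneg p hp0 _ _ : 0 ≤ q3 a b c) (hq3le a) hq2le
    linarith
  calc ∑ a : α, T (q3 a b c) (q1 c)
      = ∑ a : α, (T (q3 a b c) (q2 b c) + -(q3 a b c * Real.logb 2 (q2 b c / q1 c))) :=
        Finset.sum_congr rfl fun a _ => hterm a
    _ = (∑ a : α, T (q3 a b c) (q2 b c)) + -((∑ a : α, q3 a b c) * Real.logb 2 (q2 b c / q1 c)) := by
        rw [Finset.sum_add_distrib]
        congr 1
        simp only [neg_mul_eq_neg_mul]
        rw [← Finset.sum_mul]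
        simp [Finset.sum_neg_distrib]
    _ = T (q2 b c) (q1 c) + ∑ a : α, T (q3 a b c) (q2 b c) := by
        rw [hmarg]; unfold T; ring

lemma gibbs_pt {u v w z : ℝ} (hu : 0 < u) (huv : u ≤ v) (hw : 0 < w) (hz : 0 < z) :
    u * Real.logb 2 (u / v) - u * Real.logb 2 (w / z) ≥ (u - v * w / z) / Real.log 2 := by
  have hv : 0 < v := lt_of_lt_of_le hu huv
  have hlog2 : 0 < Real.log 2 := Real.log_pos (by norm_num)
  have hs : 0 < v * w / (u * z) := by positivity
  have h1 : Real.log (v * w / (u * z)) ≤ v * w / (u * z) - 1 :=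
    Real.log_le_sub_one_of_pos hs
  have h2 : Real.log (u / v) - Real.log (w / z) = -Real.log (v * w / (u * z)) := by
    rw [Real.log_div (ne_of_gt hu) (ne_of_gt hv), Real.log_div (ne_of_gt hw) (ne_of_gt hz),
      Real.log_div (ne_of_gt (mul_pos hv hw)) (ne_of_gt (mul_pos hu hz)),
      Real.log_mul (ne_of_gt hv) (ne_of_gt hw), Real.log_mul (ne_of_gt hu) (ne_of_gt hz)]
    ring
  have key : u * (Real.log (u / v) - Real.log (w / z)) ≥ u - v * w / z := by
    rw [h2]
    have := mul_le_mul_of_nonneg_left h1 (le_of_lt hu)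
    have huz : u * (v * w / (u * z)) = v * w / z := by
      field_simp
    nlinarith
  unfold Real.logb
  have heq : u * (Real.log (u / v) / Real.log 2) - u * (Real.log (w / z) / Real.log 2)
      = u * (Real.log (u / v) - Real.log (w / z)) / Real.log 2 := by ring
  rw [heq]
  exact (div_le_div_iff_of_pos_right hlog2).2 key

lemma condEnt_drop (p : Ω → ℝ) (hp0 : ∀ ω, 0 ≤ p ω) (hp1 : ∑ ω, p ω = 1)
    (f : Ω → α) (g : Ω → β) (h : Ω → γ) :
    condEnt p f (fun ω => (g ω, h ω)) ≤ condEnt p f h := by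
  set Q3 : α × β × γ → ℝ := qq p (fun ω => (f ω, g ω, h ω)) with hQ3
  set q2 : β × γ → ℝ := qq p (fun ω => (g ω, h ω)) with hq2
  set q13 : α × γ → ℝ := qq p (fun ω => (f ω, h ω)) with hq13
  set q1 : γ → ℝ := qq p h with hq1
  have hmid : ∀ (a : α) (c : γ), ∑ b, Q3 (a, b, c) = q13 (a, c) := by
    intro a c
    rw [hQ3, hq13]; unfold qq
    rw [Finset.sum_comm]
    refine Finset.sum_congr rfl fun ω _ => ?_
    by_cases hfc : f ω = a ∧ h ω = c
    · simp only [Prod.mk.injEq, hfc.1, hfc.2, true_and, and_true, if_true]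
      rw [Finset.sum_ite_eq Finset.univ (g ω) (fun _ => p ω)]
      simp
    · rw [if_neg (by simp [Prod.ext_iff]; tauto)]
      refine Finset.sum_eq_zero fun b _ => ?_
      rw [if_neg (by simp [Prod.ext_iff]; tauto)]
  have hQ3nn : ∀ x, 0 ≤ Q3 x := fun x => qq_nonneg p hp0 _ _
  have hq13nn : ∀ y, 0 ≤ q13 y := fun y => qq_nonneg p hp0 _ _
  have hq2nn : ∀ y, 0 ≤ q2 y := fun y => qq_nonneg p hp0 _ _
  have hq1nn : ∀ c, 0 ≤ q1 c := fun c => qq_nonneg p hp0 _ _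
  have hQ3le2 : ∀ x : α × β × γ, Q3 x ≤ q2 x.2 := by
    rintro ⟨a, b, c⟩
    exact qq_pair_le_snd p hp0 f (fun ω => (g ω, h ω)) a (b, c)
  have hq2le : ∀ y : β × γ, q2 y ≤ q1 y.2 := by
    rintro ⟨b, c⟩; exact qq_pair_le_snd p hp0 g h b c
  have hQ3le13 : ∀ x : α × β × γ, Q3 x ≤ q13 (x.1, x.2.2) := by
    rintro ⟨a, b, c⟩
    rw [← hmid a c]
    exact Finset.single_le_sum (f := fun b => Q3 (a, b, c)) (fun b _ => hQ3nn _)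
      (Finset.mem_univ b)
  have hL : condEnt p f (fun ω => (g ω, h ω)) = ∑ x : α × β × γ, T (Q3 x) (q2 x.2) := by
    rw [condEnt_eq]
    exact (Fintype.sum_prod_type (f := fun x : α × β × γ => T (Q3 x) (q2 x.2))).symm
  have hR : condEnt p f h
      = ∑ x : α × β × γ, -(Q3 x * Real.logb 2 (q13 (x.1, x.2.2) / q1 x.2.2)) := by
    rw [condEnt_eq, Fintype.sum_prod_type]
    refine Finset.sum_congr rfl fun a _ => ?_
    rw [Fintype.sum_prod_type, Finset.sum_comm]
    refine Finset.sum_congr rfl fun c _ => ?_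
    have step : ∑ b : β, -(Q3 (a, b, c) * Real.logb 2 (q13 (a, c) / q1 c))
        = -((∑ b : β, Q3 (a, b, c)) * Real.logb 2 (q13 (a, c) / q1 c)) := by
      simp only [neg_mul_eq_neg_mul]
      rw [← Finset.sum_mul]
      simp
    rw [step, hmid a c]
    rfl
  rw [hL, hR, ← sub_nonneg, ← Finset.sum_sub_distrib]
  have hDeq : ∀ x : α × β × γ,
      -(Q3 x * Real.logb 2 (q13 (x.1, x.2.2) / q1 x.2.2)) - T (Q3 x) (q2 x.2)
      = Q3 x * Real.logb 2 (Q3 x / q2 x.2)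
        - Q3 x * Real.logb 2 (q13 (x.1, x.2.2) / q1 x.2.2) := by
    intro x; unfold T; ring
  set s := Finset.univ.filter (fun x : α × β × γ => 0 < Q3 x) with hs
  have hzero : ∀ x : α × β × γ, x ∉ s → Q3 x = 0 := by
    intro x hx
    rcases eq_or_lt_of_le (hQ3nn x) with h' | h'
    · exact h'.symm
    · exact absurd (Finset.mem_filter.2 ⟨Finset.mem_univ x, h'⟩) hx
  have hsub : (∑ x : α × β × γ,
      (-(Q3 x * Real.logb 2 (q13 (x.1, x.2.2) / q1 x.2.2)) - T (Q3 x) (q2 x.2)))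
      = ∑ x ∈ s, (-(Q3 x * Real.logb 2 (q13 (x.1, x.2.2) / q1 x.2.2)) - T (Q3 x) (q2 x.2)) := by
    symm
    apply Finset.sum_subset (Finset.filter_subset _ _)
    intro x _ hx
    rw [hDeq x, hzero x hx]; ring
  have hbound : ∀ x ∈ s,
      (Q3 x - q2 x.2 * q13 (x.1, x.2.2) / q1 x.2.2) / Real.log 2
      ≤ -(Q3 x * Real.logb 2 (q13 (x.1, x.2.2) / q1 x.2.2)) - T (Q3 x) (q2 x.2) := by
    intro x hx
    have hQpos : 0 < Q3 x := (Finset.mem_filter.1 hx).2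
    have h13 : 0 < q13 (x.1, x.2.2) := lt_of_lt_of_le hQpos (hQ3le13 x)
    have h1 : 0 < q1 x.2.2 := lt_of_lt_of_le (lt_of_lt_of_le hQpos (hQ3le2 x)) (hq2le x.2)
    rw [hDeq x]
    exact gibbs_pt hQpos (hQ3le2 x) h13 h1
  have hsum1 : ∑ x : α × β × γ, Q3 x = 1 := by rw [hQ3, sum_qq, hp1]
  have hsumE : ∑ x : α × β × γ, q2 x.2 * q13 (x.1, x.2.2) / q1 x.2.2 = 1 := by
    have key : ∀ c : γ, ∑ a : α, ∑ b : β, q2 (b, c) * q13 (a, c) / q1 c = q1 c := by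
      intro c
      have hb : ∀ a : α, ∑ b : β, q2 (b, c) * q13 (a, c) / q1 c
          = q1 c * (q13 (a, c) / q1 c) := by
        intro a
        simp only [mul_div_assoc]
        rw [← Finset.sum_mul]
        congr 1
        exact qq_pair_snd p g h c
      rw [Finset.sum_congr rfl fun a _ => hb a]
      rw [← Finset.mul_sum, ← Finset.sum_div]
      rw [qq_pair_snd p f h c]
      by_cases hq : q1 c = 0
      · simp [hq]
      · rw [div_self hq, mul_one]
    calc ∑ x : α × β × γ, q2 x.2 * q13 (x.1, x.2.2) / q1 x.2.2
        = ∑ a : α, ∑ b : β, ∑ c : γ, q2 (b, c) * q13 (a, c) / q1 c := by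
          rw [Fintype.sum_prod_type]
          exact Finset.sum_congr rfl fun a _ => Fintype.sum_prod_type _
      _ = ∑ c : γ, ∑ a : α, ∑ b : β, q2 (b, c) * q13 (a, c) / q1 c := by
          rw [show (∑ a : α, ∑ b : β, ∑ c : γ, q2 (b, c) * q13 (a, c) / q1 c)
              = ∑ a : α, ∑ c : γ, ∑ b : β, q2 (b, c) * q13 (a, c) / q1 c from
            Finset.sum_congr rfl fun a _ => Finset.sum_comm]
          exact Finset.sum_comm
      _ = ∑ c : γ, q1 c := Finset.sum_congr rfl fun c _ => key c
      _ = 1 := by rw [hq1, sum_qq, hp1]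
  rw [hsub]
  have hstep : (∑ x ∈ s, (Q3 x - q2 x.2 * q13 (x.1, x.2.2) / q1 x.2.2)) / Real.log 2
      ≤ ∑ x ∈ s, (-(Q3 x * Real.logb 2 (q13 (x.1, x.2.2) / q1 x.2.2)) - T (Q3 x) (q2 x.2)) := by
    rw [Finset.sum_div]
    exact Finset.sum_le_sum hbound
  refine le_trans ?_ hstep
  apply div_nonneg _ (le_of_lt (Real.log_pos (by norm_num)))
  rw [Finset.sum_sub_distrib]
  have h1 : ∑ x ∈ s, Q3 x = 1 := by
    rw [← hsum1]
    apply Finset.sum_subset (Finset.filter_subset _ _)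
    intro x _ hx
    exact hzero x hx
  have h2 : ∑ x ∈ s, q2 x.2 * q13 (x.1, x.2.2) / q1 x.2.2 ≤ 1 := by
    rw [← hsumE]
    apply Finset.sum_le_sum_of_subset_of_nonneg (Finset.filter_subset _ _)
    intro x _ _
    exact div_nonneg (mul_nonneg (hq2nn _) (hq13nn _)) (hq1nn _)
  linarith

section Congr
variable {α' β' : Type*} [Fintype α'] [Fintype β'] [DecidableEq α'] [DecidableEq β']

lemma fiber_iff {f : Ω → α} {f' : Ω → α'} (u : α → α') (v : α' → α)
    (hu : ∀ ω, u (f ω) = f' ω) (hv : ∀ ω, v (f' ω) = f ω) (ω₀ ω : Ω) :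
    f' ω = f' ω₀ ↔ f ω = v (f' ω₀) := by
  constructor
  · intro hh; rw [← hh, hv]
  · intro hh
    calc f' ω = u (f ω) := (hu ω).symm
      _ = u (v (f' ω₀)) := by rw [hh]
      _ = u (f ω₀) := by rw [hv]
      _ = f' ω₀ := hu ω₀

lemma qq_congr {f : Ω → α} {f' : Ω → α'} (p : Ω → ℝ) (u : α → α') (v : α' → α)
    (hu : ∀ ω, u (f ω) = f' ω) (hv : ∀ ω, v (f' ω) = f ω) (ω₀ : Ω) (g : Ω → β) (b : β) :
    qq p (fun ω => (f' ω, g ω)) (f' ω₀, b) = qq p (fun ω => (f ω, g ω)) (v (f' ω₀), b) := by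
  unfold qq
  refine Finset.sum_congr rfl fun ω _ => ?_
  congr 1
  simp only [Prod.mk.injEq]
  rw [eq_iff_iff]
  constructor
  · rintro ⟨h1, h2⟩; exact ⟨(fiber_iff u v hu hv ω₀ ω).1 h1, h2⟩
  · rintro ⟨h1, h2⟩; exact ⟨(fiber_iff u v hu hv ω₀ ω).2 h1, h2⟩

lemma qq_eq_zero_of_not_mem {f : Ω → α} (p : Ω → ℝ) (a : α)
    (ha : a ∉ Finset.univ.image f) : qq p f a = 0 := by
  refine Finset.sum_eq_zero fun ω _ => ?_
  rw [if_neg]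
  intro hh
  exact ha (Finset.mem_image.2 ⟨ω, Finset.mem_univ ω, hh⟩)

lemma condEnt_congr_left (p : Ω → ℝ) (f : Ω → α) (f' : Ω → α') (g : Ω → β)
    (u : α → α') (v : α' → α) (hu : ∀ ω, u (f ω) = f' ω) (hv : ∀ ω, v (f' ω) = f ω) :
    condEnt p f' g = condEnt p f g := by
  rw [condEnt_eq, condEnt_eq, Finset.sum_comm, Finset.sum_comm (γ := α)]
  refine Finset.sum_congr rfl fun b _ => ?_
  have h1 : ∑ a' : α', T (qq p (fun ω => (f' ω, g ω)) (a', b)) (qq p g b)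
      = ∑ a' ∈ Finset.univ.image f', T (qq p (fun ω => (f' ω, g ω)) (a', b)) (qq p g b) := by
    symm
    apply Finset.sum_subset (Finset.subset_univ _)
    intro a' _ ha'
    have : qq p (fun ω => (f' ω, g ω)) (a', b) = 0 := by
      refine Finset.sum_eq_zero fun ω _ => ?_
      rw [if_neg]
      intro hh
      exact ha' (Finset.mem_image.2 ⟨ω, Finset.mem_univ ω, (Prod.mk.injEq _ _ _ _ ▸ hh).1⟩)
    rw [this, T_zero]
  have h2 : ∑ a : α, T (qq p (fun ω => (f ω, g ω)) (a, b)) (qq p g b)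
      = ∑ a ∈ Finset.univ.image f, T (qq p (fun ω => (f ω, g ω)) (a, b)) (qq p g b) := by
    symm
    apply Finset.sum_subset (Finset.subset_univ _)
    intro a _ ha
    have : qq p (fun ω => (f ω, g ω)) (a, b) = 0 := by
      refine Finset.sum_eq_zero fun ω _ => ?_
      rw [if_neg]
      intro hh
      exact ha (Finset.mem_image.2 ⟨ω, Finset.mem_univ ω, (Prod.mk.injEq _ _ _ _ ▸ hh).1⟩)
    rw [this, T_zero]
  rw [h1, h2]
  refine Finset.sum_bij' (fun a' _ => v a') (fun a _ => u a) ?_ ?_ ?_ ?_ ?_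
  · intro a' ha'
    obtain ⟨ω₀, _, rfl⟩ := Finset.mem_image.1 ha'
    rw [hv]
    exact Finset.mem_image.2 ⟨ω₀, Finset.mem_univ ω₀, rfl⟩
  · intro a ha
    obtain ⟨ω₀, _, rfl⟩ := Finset.mem_image.1 ha
    rw [hu]
    exact Finset.mem_image.2 ⟨ω₀, Finset.mem_univ ω₀, rfl⟩
  · intro a' ha'
    obtain ⟨ω₀, _, rfl⟩ := Finset.mem_image.1 ha'
    rw [hv, hu]
  · intro a ha
    obtain ⟨ω₀, _, rfl⟩ := Finset.mem_image.1 ha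
    rw [hu, hv]
  · intro a' ha'
    obtain ⟨ω₀, _, rfl⟩ := Finset.mem_image.1 ha'
    rw [qq_congr p u v hu hv ω₀ g b]

lemma condEnt_congr_right (p : Ω → ℝ) (f : Ω → α) (g : Ω → β) (g' : Ω → β')
    (u : β → β') (v : β' → β) (hu : ∀ ω, u (g ω) = g' ω) (hv : ∀ ω, v (g' ω) = g ω) :
    condEnt p f g' = condEnt p f g := by
  rw [condEnt_eq, condEnt_eq, Finset.sum_comm, Finset.sum_comm (γ := α)]
  have h1 : ∑ b' : β', ∑ a : α, T (qq p (fun ω => (f ω, g' ω)) (a, b')) (qq p g' b')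
      = ∑ b' ∈ Finset.univ.image g', ∑ a : α,
          T (qq p (fun ω => (f ω, g' ω)) (a, b')) (qq p g' b') := by
    symm
    apply Finset.sum_subset (Finset.subset_univ _)
    intro b' _ hb'
    refine Finset.sum_eq_zero fun a _ => ?_
    have : qq p (fun ω => (f ω, g' ω)) (a, b') = 0 := by
      refine Finset.sum_eq_zero fun ω _ => ?_
      rw [if_neg]
      intro hh
      exact hb' (Finset.mem_image.2 ⟨ω, Finset.mem_univ ω, (Prod.mk.injEq _ _ _ _ ▸ hh).2⟩)
    rw [this, T_zero]
  have h2 : ∑ b : β, ∑ a : α, T (qq p (fun ω => (f ω, g ω)) (a, b)) (qq p g b)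
      = ∑ b ∈ Finset.univ.image g, ∑ a : α,
          T (qq p (fun ω => (f ω, g ω)) (a, b)) (qq p g b) := by
    symm
    apply Finset.sum_subset (Finset.subset_univ _)
    intro b _ hb
    refine Finset.sum_eq_zero fun a _ => ?_
    have : qq p (fun ω => (f ω, g ω)) (a, b) = 0 := by
      refine Finset.sum_eq_zero fun ω _ => ?_
      rw [if_neg]
      intro hh
      exact hb (Finset.mem_image.2 ⟨ω, Finset.mem_univ ω, (Prod.mk.injEq _ _ _ _ ▸ hh).2⟩)
    rw [this, T_zero]
  rw [h1, h2]
  refine Finset.sum_bij' (fun b' _ => v b') (fun b _ => u b) ?_ ?_ ?_ ?_ ?_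
  · intro b' hb'
    obtain ⟨ω₀, _, rfl⟩ := Finset.mem_image.1 hb'
    rw [hv]
    exact Finset.mem_image.2 ⟨ω₀, Finset.mem_univ ω₀, rfl⟩
  · intro b hb
    obtain ⟨ω₀, _, rfl⟩ := Finset.mem_image.1 hb
    rw [hu]
    exact Finset.mem_image.2 ⟨ω₀, Finset.mem_univ ω₀, rfl⟩
  · intro b' hb'
    obtain ⟨ω₀, _, rfl⟩ := Finset.mem_image.1 hb'
    rw [hv, hu]
  · intro b hb
    obtain ⟨ω₀, _, rfl⟩ := Finset.mem_image.1 hb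
    rw [hu, hv]
  · intro b' hb'
    obtain ⟨ω₀, _, rfl⟩ := Finset.mem_image.1 hb'
    refine Finset.sum_congr rfl fun a _ => ?_
    have e1 : qq p (fun ω => (f ω, g' ω)) (a, g' ω₀)
        = qq p (fun ω => (f ω, g ω)) (a, v (g' ω₀)) := by
      unfold qq
      refine Finset.sum_congr rfl fun ω _ => ?_
      congr 1
      simp only [Prod.mk.injEq]
      rw [eq_iff_iff]
      constructor
      · rintro ⟨hx, hy⟩; exact ⟨hx, (fiber_iff u v hu hv ω₀ ω).1 hy⟩
      · rintro ⟨hx, hy⟩; exact ⟨hx, (fiber_iff u v hu hv ω₀ ω).2 hy⟩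
    have e2 : qq p g' (g' ω₀) = qq p g (v (g' ω₀)) := by
      unfold qq
      refine Finset.sum_congr rfl fun ω _ => ?_
      congr 1
      rw [eq_iff_iff]
      exact fiber_iff u v hu hv ω₀ ω
    rw [e1, e2]

end Congr

end ShearerAux

open ShearerAux

/-- If every element of `{1,…,k}` lies in exactly `h` members of the collection `𝒮`,
then `∑_{S ∈ 𝒮} H(Y_S | X) ≥ h · H(Y_{[k]} | X)`. -/
theorem covering_condEnt_ineq {k : ℕ} {Ω G V : Type*} [Fintype Ω] [Fintype G] [Fintype V]
    [DecidableEq G] [DecidableEq V]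
    (p : Ω → ℝ) (hp0 : ∀ ω, 0 ≤ p ω) (hp1 : ∑ ω : Ω, p ω = 1)
    (Y : Fin k → Ω → G) (X : Ω → V)
    (𝒮 : Finset (Finset (Fin k))) (h : ℕ)
    (hcover : ∀ a : Fin k, (𝒮.filter (fun S => a ∈ S)).card = h) :
    (h : ℝ) * condEnt p (fun ω => fun i : Fin k => Y i ω) X ≤
      ∑ S ∈ 𝒮, condEnt p (fun ω => fun i : {x // x ∈ S} => Y i ω) X := by
  classical
  set R : (S : Finset (Fin k)) → Ω → ({x // x ∈ S} → G) :=
    fun S ω i => Y i ω with hR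
  set F : Finset (Fin k) → ℝ := fun S => condEnt p (R S) X with hF
  set D : Fin k → Finset (Fin k) → ℝ :=
    fun i S => condEnt p (Y i) (fun ω => (R S ω, X ω)) with hD
  -- chain step
  have chain : ∀ (S : Finset (Fin k)) (i : Fin k), i ∉ S →
      F (insert i S) = F S + D i S := by
    intro S i hi
    have hcongr : condEnt p (R (insert i S)) X
        = condEnt p (fun ω => (Y i ω, R S ω)) X := by
      refine condEnt_congr_left p (fun ω => (Y i ω, R S ω)) (R (insert i S)) X
        (fun z (j : {x // x ∈ insert i S}) =>
          if hj : (j : Fin k) = i then z.1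
          else z.2 ⟨j, (Finset.mem_insert.1 j.2).resolve_left hj⟩)
        (fun w => (w ⟨i, Finset.mem_insert_self i S⟩,
          fun j => w ⟨j, Finset.mem_insert_of_mem j.2⟩)) ?_ ?_
      · intro ω
        funext j
        show (if hj : (j : Fin k) = i then Y i ω
          else Y (j : Fin k) ω) = Y (j : Fin k) ω
        split_ifs with hj
        · rw [hj]
        · rfl
      · intro ω
        rfl
    show condEnt p (R (insert i S)) X = F S + D i S
    rw [hcongr, condEnt_chain p hp0 (Y i) (R S) X]
  -- monotonicity step
  have mono : ∀ (i : Fin k) (S T : Finset (Fin k)), S ⊆ T → D i T ≤ D i S := by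
    intro i S T hST
    have hcongr : condEnt p (Y i) (fun ω => (R T ω, X ω))
        = condEnt p (Y i) (fun ω => (R (T \ S) ω, (R S ω, X ω))) := by
      refine condEnt_congr_right p (Y i)
        (fun ω => (R (T \ S) ω, (R S ω, X ω))) (fun ω => (R T ω, X ω))
        (fun z => ((fun (j : {x // x ∈ T}) =>
          if hj : (j : Fin k) ∈ S then z.2.1 ⟨j, hj⟩
          else z.1 ⟨j, Finset.mem_sdiff.2 ⟨j.2, hj⟩⟩), z.2.2))
        (fun z => ((fun (j : {x // x ∈ T \ S}) => z.1 ⟨j, (Finset.mem_sdiff.1 j.2).1⟩),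
          ((fun (j : {x // x ∈ S}) => z.1 ⟨j, hST j.2⟩), z.2))) ?_ ?_
      · intro ω
        refine Prod.ext ?_ rfl
        funext j
        show (if hj : (j : Fin k) ∈ S then Y (j : Fin k) ω
          else Y (j : Fin k) ω) = Y (j : Fin k) ω
        split_ifs with hj <;> rfl
      · intro ω
        rfl
    show condEnt p (Y i) (fun ω => (R T ω, X ω)) ≤ condEnt p (Y i) (fun ω => (R S ω, X ω))
    rw [hcongr]
    exact condEnt_drop p hp0 hp1 (Y i) (R (T \ S)) (fun ω => (R S ω, X ω))
  -- segments
  set seg : ℕ → Finset (Fin k) := fun N => Finset.univ.filter (fun j : Fin k => (j : ℕ) < N)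
    with hseg
  have seg_zero : seg 0 = ∅ := by
    rw [hseg]; ext j; simp
  have seg_k : seg k = Finset.univ := by
    rw [hseg]; ext j; simp [j.isLt]
  have F_empty : F ∅ = 0 := by
    haveI : Subsingleton ({x // x ∈ (∅ : Finset (Fin k))} → G) :=
      ⟨fun a b => funext fun j => absurd j.2 (Finset.notMem_empty _)⟩
    exact condEnt_subsingleton p _ _
  have seg_succ : ∀ (N : ℕ) (hN : N < k), seg (N + 1) = insert ⟨N, hN⟩ (seg N) := by
    intro N hN
    rw [hseg]; ext j
    simp only [Finset.mem_filter, Finset.mem_univ, true_and, Finset.mem_insert]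
    constructor
    · intro hj
      rcases Nat.lt_succ_iff_lt_or_eq.1 hj with hh | hh
      · exact Or.inr (by simpa using hh)
      · exact Or.inl (Fin.ext hh)
    · rintro (rfl | hj)
      · exact Nat.lt_succ_self N
      · simpa using Nat.lt_succ_of_lt (by simpa using hj)
  have seg_stall : ∀ N, ¬ N < k → seg (N + 1) = seg N := by
    intro N hN
    rw [hseg]; ext j
    simp only [Finset.mem_filter, Finset.mem_univ, true_and]
    have hjk : (j : ℕ) < k := j.isLt
    omega
  have mem_seg : ∀ (N : ℕ) (j : Fin k), j ∈ seg N ↔ (j : ℕ) < N := by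
    intro N j; rw [hseg]; simp
  -- equality for segments
  have seg_eq : ∀ N : ℕ, F (seg N) = ∑ i ∈ seg N, D i (seg (i : ℕ)) := by
    intro N
    induction N with
    | zero => rw [seg_zero, F_empty, Finset.sum_empty]
    | succ N ih =>
      by_cases hN : N < k
      · have hnot : (⟨N, hN⟩ : Fin k) ∉ seg N := by
          rw [mem_seg]; simp
        rw [seg_succ N hN, chain _ _ hnot, Finset.sum_insert hnot, ih]
        have : seg ((⟨N, hN⟩ : Fin k) : ℕ) = seg N := rfl
        rw [this]
        ring
      · rw [seg_stall N hN, ih]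
  -- inequality for arbitrary S
  have S_ineq : ∀ (S : Finset (Fin k)) (N : ℕ),
      ∑ i ∈ S ∩ seg N, D i (seg (i : ℕ)) ≤ F (S ∩ seg N) := by
    intro S N
    induction N with
    | zero =>
      rw [seg_zero, Finset.inter_empty, Finset.sum_empty, F_empty]
    | succ N ih =>
      by_cases hN : N < k
      · set i0 : Fin k := ⟨N, hN⟩ with hi0
        by_cases hiS : i0 ∈ S
        · have hins : S ∩ seg (N + 1) = insert i0 (S ∩ seg N) := by
            rw [seg_succ N hN, Finset.inter_comm, Finset.insert_inter_of_mem hiS,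
              Finset.inter_comm]
          have hnot : i0 ∉ S ∩ seg N := by
            rw [Finset.mem_inter, mem_seg]
            simp [hi0]
          rw [hins, chain _ _ hnot, Finset.sum_insert hnot]
          have hmono : D i0 (seg (i0 : ℕ)) ≤ D i0 (S ∩ seg N) := by
            apply mono
            intro j hj
            rw [Finset.mem_inter] at hj
            exact hj.2
          have : seg ((i0 : Fin k) : ℕ) = seg N := rfl
          linarith [ih, hmono]
        · have hsame : S ∩ seg (N + 1) = S ∩ seg N := by
            ext j
            simp only [Finset.mem_inter, mem_seg]
            constructor
            · rintro ⟨hjS, hjN⟩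
              refine ⟨hjS, ?_⟩
              rcases Nat.lt_succ_iff_lt_or_eq.1 hjN with hh | hh
              · exact hh
              · exfalso; apply hiS
                have : j = i0 := Fin.ext (by simpa using hh)
                rwa [← this]
            · rintro ⟨hjS, hjN⟩
              exact ⟨hjS, Nat.lt_succ_of_lt hjN⟩
          rw [hsame]
          exact ih
      · have hsame : S ∩ seg (N + 1) = S ∩ seg N := by rw [seg_stall N hN]
        rw [hsame]
        exact ih
  have S_final : ∀ S : Finset (Fin k), ∑ i ∈ S, D i (seg (i : ℕ)) ≤ F S := by
    intro S
    have hSk : S ∩ seg k = S := by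
      rw [seg_k, Finset.inter_univ]
    have := S_ineq S k
    rwa [hSk] at this
  -- full entropy
  have hfull : condEnt p (fun ω => fun i : Fin k => Y i ω) X = F Finset.univ := by
    rw [hF]
    refine (condEnt_congr_left p (fun ω => fun i : Fin k => Y i ω) (R Finset.univ) X
      (fun w (j : {x // x ∈ (Finset.univ : Finset (Fin k))}) => w j)
      (fun w (i : Fin k) => w ⟨i, Finset.mem_univ i⟩) (fun ω => rfl) (fun ω => rfl)).symm
  have huniv : F Finset.univ = ∑ i : Fin k, D i (seg (i : ℕ)) := by
    rw [← seg_k]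
    exact seg_eq k
  -- double counting
  have hswap : ∑ S ∈ 𝒮, ∑ i ∈ S, D i (seg (i : ℕ))
      = (h : ℝ) * ∑ i : Fin k, D i (seg (i : ℕ)) := by
    have step1 : ∀ S : Finset (Fin k), ∑ i ∈ S, D i (seg (i : ℕ))
        = ∑ i : Fin k, if i ∈ S then D i (seg (i : ℕ)) else 0 := by
      intro S
      rw [Finset.sum_ite_mem, Finset.univ_inter]
    rw [Finset.sum_congr rfl fun S _ => step1 S, Finset.sum_comm]
    rw [Finset.mul_sum]
    refine Finset.sum_congr rfl fun i _ => ?_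
    rw [← Finset.sum_filter, Finset.sum_const, hcover i]
    simp [mul_comm]
  calc (h : ℝ) * condEnt p (fun ω => fun i : Fin k => Y i ω) X
      = ∑ S ∈ 𝒮, ∑ i ∈ S, D i (seg (i : ℕ)) := by
        rw [hfull, huniv, hswap]
    _ ≤ ∑ S ∈ 𝒮, F S := Finset.sum_le_sum fun S _ => S_final S
    _ = ∑ S ∈ 𝒮, condEnt p (fun ω => fun i : {x // x ∈ S} => Y i ω) X := rfl
end

section
/- Let Y_1, ..., Y_k and X be finite random variables and let 1 ≤ r ≤ k. Then the sum over all r-element subsets S of {1,...,k} of H(Y_S | X) is at least binomial(k-1, r-1) · H(Y_{[k]} | X). -/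
/-!
Write `H(T)` for the joint entropy of `(Y_T, X)`, so that `H(Y_S | X) = H(S) - H(∅)`. Since
conditioning on more reduces entropy (the log-sum inequality), the increment
`H(T ∪ {i}) - H(T) = H(Y_i | Y_T, X)` only decreases as `T` grows: `H` is submodular.
Ordering the indices, the chain rule writes `H(S) - H(∅)` as the sum over `i ∈ S` of the
increments at the elements of `S` below `i`, each at least the increment at all indices below `i`.
Summed over the `r`-subsets, every `i` is counted `C(k-1, r-1)` times, and the increments at all
indices below `i` add up to `H(Y_{[k]} | X)`.
-/

open Finset

open Real

theorem sub_mul_le_mul_log_div_sub_mul_log {a b c : ℝ} (ha : 0 ≤ a) (hb : 0 ≤ b)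
    (hab : b = 0 → a = 0) (hc : 0 < c) : a - b * c ≤ a * log (a / b) - a * log c := by
  rcases ha.eq_or_lt with rfl | ha
  · simpa using mul_nonneg hb hc.le
  have hb : 0 < b := hb.lt_of_ne fun h => ha.ne' (hab h.symm)
  have hlog := one_sub_inv_le_log_of_pos (div_pos ha (mul_pos hb hc))
  rw [log_div ha.ne' (mul_pos hb hc).ne', log_mul hb.ne' hc.ne', inv_div] at hlog
  rw [log_div ha.ne' hb.ne']
  have := mul_le_mul_of_nonneg_left hlog ha.le
  rw [mul_sub, mul_one, mul_div_cancel₀ _ ha.ne'] at this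
  linarith

theorem mul_log_sum_div_sum_le {ι : Type*} (s : Finset ι) {a b : ι → ℝ}
    (ha : ∀ i ∈ s, 0 ≤ a i) (hb : ∀ i ∈ s, 0 ≤ b i) (hab : ∀ i ∈ s, b i = 0 → a i = 0) :
    (∑ i ∈ s, a i) * log ((∑ i ∈ s, a i) / ∑ i ∈ s, b i) ≤ ∑ i ∈ s, a i * log (a i / b i) := by
  have ha0 : (∑ i ∈ s, b i) = 0 → ∑ i ∈ s, a i = 0 := fun h =>
    sum_eq_zero fun i hi => hab i hi ((sum_eq_zero_iff_of_nonneg hb).1 h i hi)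
  rcases (sum_nonneg ha).eq_or_lt with hA | hA
  · rw [← hA, zero_mul]
    refine (sum_eq_zero fun i hi => ?_).ge
    rw [(sum_eq_zero_iff_of_nonneg ha).1 hA.symm i hi, zero_mul]
  have hB : 0 < ∑ i ∈ s, b i :=
    (sum_nonneg hb).lt_of_ne fun h => hA.ne' (ha0 h.symm)
  -- With `c = ∑ a / ∑ b` the left-hand sides of the termwise bounds sum to zero.
  have key := sum_le_sum fun i hi =>
    sub_mul_le_mul_log_div_sub_mul_log (ha i hi) (hb i hi) (hab i hi) (div_pos hA hB)
  rw [sum_sub_distrib, sum_sub_distrib, ← sum_mul, ← sum_mul, mul_div_cancel₀ _ hB.ne',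
    sub_self] at key
  linarith

theorem mul_logb_sum_div_sum_le {ι : Type*} (s : Finset ι) {a b : ι → ℝ} {c : ℝ} (hc : 1 < c)
    (ha : ∀ i ∈ s, 0 ≤ a i) (hb : ∀ i ∈ s, 0 ≤ b i) (hab : ∀ i ∈ s, b i = 0 → a i = 0) :
    (∑ i ∈ s, a i) * logb c ((∑ i ∈ s, a i) / ∑ i ∈ s, b i) ≤
      ∑ i ∈ s, a i * logb c (a i / b i) := by
  simp only [logb, ← mul_div_assoc, ← sum_div]
  exact div_le_div_of_nonneg_right (mul_log_sum_div_sum_le s ha hb hab) (log_pos hc).le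

theorem neg_mul_logb_div_eq {b x y : ℝ} (hx : 0 ≤ x) (hxy : x ≤ y) :
    -(x * logb b (x / y)) = -(x * logb b x) + x * logb b y := by
  rcases hx.eq_or_lt with rfl | hx
  · simp
  rw [logb_div hx.ne' (hx.trans_le hxy).ne']
  ring

section Entropy

variable {Ω α β γ : Type*} [Fintype Ω] [DecidableEq α] [DecidableEq β] [DecidableEq γ]
  {p : Ω → ℝ}

noncomputable def law (p : Ω → ℝ) (h : Ω → γ) (c : γ) : ℝ :=
  ∑ ω, if h ω = c then p ω else 0

noncomputable def entropy [Fintype γ] (p : Ω → ℝ) (h : Ω → γ) : ℝ :=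
  ∑ c, -(law p h c * logb 2 (law p h c))

theorem law_nonneg (hp : ∀ ω, 0 ≤ p ω) (h : Ω → γ) (c : γ) : 0 ≤ law p h c :=
  sum_nonneg fun ω _ => by split_ifs <;> simp [hp ω]

theorem law_mono {q : Ω → ℝ} (hpq : ∀ ω, p ω ≤ q ω) (h : Ω → γ) (c : γ) :
    law p h c ≤ law q h c :=
  sum_le_sum fun ω _ => by split_ifs <;> simp [hpq ω]

theorem law_comp [Fintype β] (p : Ω → ℝ) (h : Ω → β) (φ : β → γ) (c : γ) :
    law p (φ ∘ h) c = ∑ b with φ b = c, law p h b := by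
  simp only [law]
  rw [sum_comm]
  refine sum_congr rfl fun ω _ => ?_
  simp [sum_ite_eq]

theorem sum_law_restrict [Fintype α] (p : Ω → ℝ) (f : Ω → α) (g : Ω → β) (b : β) :
    ∑ a, law (fun ω => if f ω = a then p ω else 0) g b = law p g b := by
  simp only [law]
  rw [sum_comm]
  refine sum_congr rfl fun ω _ => ?_
  simp

theorem law_restrict (p : Ω → ℝ) (f : Ω → α) (g : Ω → β) (a : α) (b : β) :
    law (fun ω => if f ω = a then p ω else 0) g b =
      ∑ ω, if f ω = a ∧ g ω = b then p ω else 0 :=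
  sum_congr rfl fun ω _ => by simp only [and_comm (a := f ω = a), ite_and]

theorem law_pair (p : Ω → ℝ) (f : Ω → α) (g : Ω → β) (a : α) (b : β) :
    law p (fun ω => (f ω, g ω)) (a, b) = law (fun ω => if f ω = a then p ω else 0) g b := by
  rw [law_restrict]
  simp only [law, Prod.mk.injEq]

variable [Fintype α] [Fintype β] [Fintype γ]

theorem condEnt_eq_sum_law (p : Ω → ℝ) (f : Ω → α) (g : Ω → β) :
    condEnt p f g = ∑ a, ∑ b,
      -(law (fun ω => if f ω = a then p ω else 0) g b *
        logb 2 (law (fun ω => if f ω = a then p ω else 0) g b / law p g b)) := by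
  simp only [condEnt, law_restrict]
  rfl

theorem entropy_comp_of_injective (p : Ω → ℝ) (h : Ω → β) {e : β → γ}
    (he : Function.Injective e) : entropy p (e ∘ h) = entropy p h := by
  have hlaw : ∀ b, law p (e ∘ h) (e b) = law p h b := fun b =>
    sum_congr rfl fun ω _ => by simp [he.eq_iff]
  have hzero : ∀ c ∉ Set.range e, law p (e ∘ h) c = 0 := fun c hc =>
    sum_eq_zero fun ω _ => if_neg fun hω => hc ⟨h ω, hω⟩
  refine (Fintype.sum_of_injective e he _ _ (fun c hc => ?_) fun b => ?_).symm
  · simp [hzero c hc]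
  · simp [hlaw]

end Entropy

section ConditionalEntropy

variable {Ω α β γ : Type*} [Fintype Ω] [Fintype α] [Fintype β] [Fintype γ]
  [DecidableEq α] [DecidableEq β] [DecidableEq γ] {p : Ω → ℝ}

theorem condEnt_eq_entropy_sub (hp : ∀ ω, 0 ≤ p ω) (f : Ω → α) (g : Ω → β) :
    condEnt p f g = entropy p (fun ω => (f ω, g ω)) - entropy p g := by
  have hg : entropy p g = -∑ a, ∑ b,
      law (fun ω => if f ω = a then p ω else 0) g b * logb 2 (law p g b) := by
    rw [sum_comm]
    simp only [entropy, ← sum_mul, sum_law_restrict, sum_neg_distrib]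
  rw [condEnt_eq_sum_law, entropy, Fintype.sum_prod_type, hg, sub_neg_eq_add, ← sum_add_distrib]
  refine sum_congr rfl fun a _ => ?_
  rw [← sum_add_distrib]
  refine sum_congr rfl fun b _ => ?_
  rw [law_pair]
  refine neg_mul_logb_div_eq (law_nonneg (fun ω => ?_) g b) (law_mono (fun ω => ?_) g b) <;>
    split_ifs <;> simp [hp ω]

theorem condEnt_comp_left_of_injective (hp : ∀ ω, 0 ≤ p ω) {e : α → γ}
    (he : Function.Injective e) (f : Ω → α) (g : Ω → β) :
    condEnt p (e ∘ f) g = condEnt p f g := by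
  rw [condEnt_eq_entropy_sub hp, condEnt_eq_entropy_sub hp]
  congr 1
  exact entropy_comp_of_injective p (fun ω => (f ω, g ω)) (he.prodMap Function.injective_id)

theorem condEnt_le_condEnt_comp (hp : ∀ ω, 0 ≤ p ω) (f : Ω → α) (g : Ω → β) (φ : β → γ) :
    condEnt p f g ≤ condEnt p f (φ ∘ g) := by
  rw [condEnt_eq_sum_law, condEnt_eq_sum_law]
  refine sum_le_sum fun a _ => ?_
  have hq : ∀ ω, 0 ≤ if f ω = a then p ω else 0 := fun ω => by split_ifs <;> simp [hp ω]
  have hqp : ∀ ω, (if f ω = a then p ω else 0) ≤ p ω := fun ω => by split_ifs <;> simp [hp ω]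
  rw [← sum_fiberwise univ φ]
  refine sum_le_sum fun c _ => ?_
  rw [law_comp, law_comp, sum_neg_distrib, neg_le_neg_iff]
  refine mul_logb_sum_div_sum_le _ one_lt_two (fun b _ => law_nonneg hq g b)
    (fun b _ => law_nonneg hp g b) fun b _ h => ?_
  exact le_antisymm ((law_mono hqp g b).trans_eq h) (law_nonneg hq g b)

end ConditionalEntropy

section SetFunction

variable {ι : Type*} [DecidableEq ι]

def HasDiminishingIncrements (f : Finset ι → ℝ) : Prop :=
  ∀ ⦃A B : Finset ι⦄ ⦃i : ι⦄, A ⊆ B → i ∉ B → f (insert i B) - f B ≤ f (insert i A) - f A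

variable [LinearOrder ι]

theorem sub_empty_eq_sum_increments (f : Finset ι → ℝ) (S : Finset ι) :
    f S - f ∅ = ∑ i ∈ S, (f (insert i (S.filter (· < i))) - f (S.filter (· < i))) := by
  induction S using Finset.induction_on_max with
  | empty => simp
  | insert a s ha ih =>
    have hbelow_a : (insert a s).filter (· < a) = s := by
      rw [filter_insert, if_neg (lt_irrefl a), filter_true_of_mem ha]
    have hbelow : ∀ i ∈ s, (insert a s).filter (· < i) = s.filter (· < i) := fun i hi => by
      rw [filter_insert, if_neg (ha i hi).not_gt]
    rw [sum_insert fun h => lt_irrefl a (ha a h), hbelow_a,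
      sum_congr rfl fun i hi => by rw [hbelow i hi], ← ih]
    ring

variable [Fintype ι] {f : Finset ι → ℝ}

theorem sum_increments_le_sub_empty (hf : HasDiminishingIncrements f) (S : Finset ι) :
    ∑ i ∈ S, (f (insert i (univ.filter (· < i))) - f (univ.filter (· < i))) ≤ f S - f ∅ := by
  rw [sub_empty_eq_sum_increments f S]
  exact sum_le_sum fun i _ => hf (filter_subset_filter _ (subset_univ S)) (by simp)

theorem mul_sub_empty_le_sum_of_card_filter_mem (hf : HasDiminishingIncrements f)
    {F : Finset (Finset ι)} {t : ℕ} (hF : ∀ i, #(F.filter (i ∈ ·)) = t) :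
    t * (f univ - f ∅) ≤ ∑ S ∈ F, (f S - f ∅) := by
  set d := fun i => f (insert i (univ.filter (· < i))) - f (univ.filter (· < i))
  calc t * (f univ - f ∅) = ∑ i, ∑ _S ∈ F.filter (i ∈ ·), d i := by
        simp only [sub_empty_eq_sum_increments f univ, mul_sum, sum_const, hF, nsmul_eq_mul]
        rfl
    _ = ∑ S ∈ F, ∑ i ∈ S, d i := sum_comm' fun i S => by simp [and_comm]
    _ ≤ ∑ S ∈ F, (f S - f ∅) := sum_le_sum fun S _ => sum_increments_le_sub_empty hf S

end SetFunction

section JointEntropy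

variable {Ω ι G V : Type*} [Fintype Ω] [DecidableEq ι] [Fintype G] [Fintype V]
  [DecidableEq G] [DecidableEq V] {p : Ω → ℝ}

noncomputable def jointEntropy (p : Ω → ℝ) (Y : ι → Ω → G) (X : Ω → V) (T : Finset ι) : ℝ :=
  entropy p (fun ω => ((fun j : T => Y j ω), X ω))

theorem condEnt_eq_jointEntropy_insert_sub (hp : ∀ ω, 0 ≤ p ω) (Y : ι → Ω → G) (X : Ω → V)
    (T : Finset ι) (i : ι) :
    condEnt p (Y i) (fun ω => ((fun j : T => Y j ω), X ω)) =
      jointEntropy p Y X (insert i T) - jointEntropy p Y X T := by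
  rw [condEnt_eq_entropy_sub hp]
  congr 1
  refine entropy_comp_of_injective p (fun ω => ((fun j : (insert i T : Finset ι) => Y j ω), X ω))
    (e := fun t => (t.1 ⟨i, mem_insert_self i T⟩,
      (@restrict₂ _ (fun _ => G) _ _ (subset_insert i T) t.1, t.2))) ?_
  rintro ⟨t, v⟩ ⟨t', v'⟩ h
  simp only [Prod.mk.injEq] at h
  obtain ⟨hi, hT, rfl⟩ := h
  refine Prod.ext (funext fun ⟨j, hj⟩ => ?_) rfl
  rcases mem_insert.1 hj with rfl | hj
  · exact hi
  · exact congrFun hT ⟨j, hj⟩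

theorem jointEntropy_hasDiminishingIncrements (hp : ∀ ω, 0 ≤ p ω) (Y : ι → Ω → G)
    (X : Ω → V) : HasDiminishingIncrements (jointEntropy p Y X) := by
  intro A B i hAB _
  rw [← condEnt_eq_jointEntropy_insert_sub hp, ← condEnt_eq_jointEntropy_insert_sub hp]
  exact condEnt_le_condEnt_comp hp (Y i) _ (Prod.map (@restrict₂ _ (fun _ => G) _ _ hAB) id)

theorem condEnt_eq_jointEntropy_sub (hp : ∀ ω, 0 ≤ p ω) (Y : ι → Ω → G) (X : Ω → V)
    (S : Finset ι) :
    condEnt p (fun ω => fun j : S => Y j ω) X =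
      jointEntropy p Y X S - jointEntropy p Y X ∅ := by
  rw [condEnt_eq_entropy_sub hp]
  congr 1
  exact entropy_comp_of_injective p (fun ω => ((fun j : (∅ : Finset ι) => Y j ω), X ω))
    Prod.snd_injective

end JointEntropy

theorem han_condEnt_ineq_general {k : ℕ} {Ω G V : Type*} [Fintype Ω] [Fintype G] [Fintype V]
    [DecidableEq G] [DecidableEq V]
    (p : Ω → ℝ) (hp0 : ∀ ω, 0 ≤ p ω)
    (Y : Fin k → Ω → G) (X : Ω → V)
    (r : ℕ) (hr : 1 ≤ r) :
    ((k - 1).choose (r - 1) : ℝ) * condEnt p (fun ω => fun i : Fin k => Y i ω) X ≤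
      ∑ S ∈ Finset.powersetCard r (Finset.univ : Finset (Fin k)),
        condEnt p (fun ω => fun i : {x // x ∈ S} => Y i ω) X := by
  have hcount : ∀ i : Fin k,
      #((powersetCard r univ).filter (i ∈ ·)) = (k - 1).choose (r - 1) := by
    intro i
    simpa using card_filter_powersetCard_subset {i} univ r (subset_univ _) (by simpa using hr)
  have huniv : Function.Injective (@Finset.restrict (Fin k) (fun _ => G) univ) :=
    fun t t' h => funext fun i => congrFun h ⟨i, mem_univ i⟩
  have hfull : condEnt p (fun ω => fun i : Fin k => Y i ω) X =
      jointEntropy p Y X univ - jointEntropy p Y X ∅ := by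
    rw [← condEnt_comp_left_of_injective hp0 huniv]
    exact condEnt_eq_jointEntropy_sub hp0 Y X univ
  rw [hfull]
  simp only [condEnt_eq_jointEntropy_sub hp0]
  exact mul_sub_empty_le_sum_of_card_filter_mem (jointEntropy_hasDiminishingIncrements hp0 Y X)
    hcount

/-- Conditional Han inequality: the sum over all `r`-element subsets `S` of `{1,…,k}`
of `H(Y_S | X)` is at least `C(k-1, r-1) · H(Y_{[k]} | X)`. -/
theorem han_condEnt_ineq {k : ℕ} {Ω G V : Type*} [Fintype Ω] [Fintype G] [Fintype V]
    [DecidableEq G] [DecidableEq V]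
    (p : Ω → ℝ) (hp0 : ∀ ω, 0 ≤ p ω) (hp1 : ∑ ω : Ω, p ω = 1)
    (Y : Fin k → Ω → G) (X : Ω → V)
    (r : ℕ) (hr : 1 ≤ r) (hk : r ≤ k) :
    ((k - 1).choose (r - 1) : ℝ) * condEnt p (fun ω => fun i : Fin k => Y i ω) X ≤
      ∑ S ∈ Finset.powersetCard r (Finset.univ : Finset (Fin k)),
        condEnt p (fun ω => fun i : {x // x ∈ S} => Y i ω) X :=
  han_condEnt_ineq_general p hp0 Y X r hr
end

section
/- For any prime power q and natural numbers k > r ≥ 1, there exist a natural number n and vectors v_1, ..., v_r in (F_{q^n})^k such that v_{i,j} = δ_{i,j} for j = 1,...,r, and for every injective function s from {1,...,r} to {1,...,k}, the r × r matrix with entries (v_{i, s(j)})_{i,j} is invertible. -/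
/-- MDS-type generator matrix lemma: for a prime power `q = p^e` and `k > r ≥ 1`,
there are `n ≥ 1` and vectors `v₁, …, v_r ∈ (F_{q^n})^k` in systematic form
(`v_{i,j} = δ_{i,j}` for `j ≤ r`) such that every `r × r` submatrix obtained by
selecting `r` distinct columns is invertible. Here `F_{q^n} = GaloisField p (e·n)`. -/
theorem exists_mds_systematic (p e k r : ℕ) [Fact p.Prime] (he : 1 ≤ e)
    (hr : 1 ≤ r) (hk : r < k) :
    ∃ n : ℕ, 1 ≤ n ∧ ∃ v : Fin r → Fin k → GaloisField p (e * n),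
      (∀ i j : Fin r, v i (Fin.castLE hk.le j) = if i = j then 1 else 0) ∧
      ∀ s : Fin r → Fin k, Function.Injective s →
        (Matrix.of fun i j : Fin r => v i (s j)).det ≠ 0 := by
  refine ⟨k, le_trans hr hk.le, ?_⟩
  have hp : 2 ≤ p := (Fact.out (p := p.Prime)).two_le
  have hek : 0 < e * k := Nat.mul_pos he (hr.trans hk.le)
  haveI : Fintype (GaloisField p (e * k)) := Fintype.ofFinite _
  have hcard : Fintype.card (Fin k) ≤ Fintype.card (GaloisField p (e * k)) := by
    rw [Fintype.card_fin, ← Nat.card_eq_fintype_card, GaloisField.card p (e * k) hek.ne']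
    calc k ≤ 2 ^ k := (Nat.lt_two_pow_self (n := k)).le
      _ ≤ 2 ^ (e * k) := Nat.pow_le_pow_right (by norm_num)
            (Nat.le_mul_of_pos_left k he)
      _ ≤ p ^ (e * k) := Nat.pow_le_pow_left hp _
  obtain ⟨x⟩ : Nonempty (Fin k ↪ GaloisField p (e * k)) :=
    Function.Embedding.nonempty_iff_card_le.2 hcard
  let M : Matrix (Fin r) (Fin k) (GaloisField p (e * k)) := Matrix.of fun i j => x j ^ (i : ℕ)
  have hdet : ∀ s : Fin r → Fin k, Function.Injective s →
      (M.submatrix id s).det ≠ 0 := by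
    intro s hs
    have ht : Matrix.transpose (M.submatrix id s) = Matrix.vandermonde fun i => x (s i) := by
      ext i j; rfl
    rw [← Matrix.det_transpose, ht, Matrix.det_vandermonde_ne_zero_iff]
    exact fun a b h => hs (x.injective h)
  set B : Matrix (Fin r) (Fin r) (GaloisField p (e * k)) := M.submatrix id (Fin.castLE hk.le) with hBdef
  have hB : IsUnit B.det :=
    isUnit_iff_ne_zero.2 (hdet _ (Fin.castLE_injective hk.le))
  refine ⟨fun i j => (B⁻¹ * M) i j, ?_, ?_⟩
  · intro i j
    show (B⁻¹ * M) i (Fin.castLE hk.le j) = _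
    have h1 : (B⁻¹ * M) i (Fin.castLE hk.le j) = (B⁻¹ * B) i j := by
      simp [Matrix.mul_apply, hBdef, Matrix.submatrix_apply]
    rw [h1, Matrix.nonsing_inv_mul B hB, Matrix.one_apply]
  · intro s hs
    show (Matrix.of fun i j : Fin r => (B⁻¹ * M) i (s j)).det ≠ 0
    have hm : (Matrix.of fun i j : Fin r => (B⁻¹ * M) i (s j))
        = B⁻¹ * M.submatrix id s := by
      ext i j; simp [Matrix.mul_apply]
    rw [hm, Matrix.det_mul]
    exact mul_ne_zero (Matrix.isUnit_nonsing_inv_det B hB).ne_zero (hdet s hs)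
end

section
/- A d × d matrix over Z_d is called an anti-Latin square if each row has two equal entries and each column has two equal entries. For every d > 2, there exists a pair of d × d anti-Latin squares (a_{i,j}) and (b_{i,j}) such that the map (i,j) ↦ (a_{i,j}, b_{i,j}) from Z_d × Z_d to Z_d × Z_d is injective. -/
/-- A `d × d` matrix over `Z_d` (given as a function) is an anti-Latin square if
every row has a repeated entry and every column has a repeated entry. -/
def IsAntiLatin {d : ℕ} (A : ZMod d → ZMod d → ZMod d) : Prop :=
  (∀ i : ZMod d, ∃ j j' : ZMod d, j ≠ j' ∧ A i j = A i j') ∧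
  (∀ j : ZMod d, ∃ i i' : ZMod d, i ≠ i' ∧ A i j = A i' j)

/-!
The superposition map is the permutation of `Z_d × Z_d` that fixes every off-diagonal cell
`(i, j)` and moves the diagonal cell `(i, i)` to `(i + 1, i + 1)`. Its first coordinate is
constant equal to `i` on row `i` off the diagonal, which repeats once `d > 2`, and on column
`j` takes the value `j + 1` at both `(j, j)` and `(j + 1, j)`. The second coordinate is the
transpose of the first.
-/

open Function

section ShiftDiagonal

variable {α : Type*} [DecidableEq α] (s : α → α)

def shiftDiagonal (p : α × α) : α × α :=
  if p.1 = p.2 then (s p.1, s p.1) else p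

variable {s}

theorem shiftDiagonal_injective (hs : Injective s) : Injective (shiftDiagonal s) := by
  rintro ⟨i, j⟩ ⟨k, l⟩ h
  simp only [shiftDiagonal] at h
  split_ifs at h with hij hkl hkl
  · subst hij hkl
    rw [hs (Prod.mk.inj h).1]
  · exact absurd ((Prod.mk.inj h).1.symm.trans (Prod.mk.inj h).2) hkl
  · exact absurd ((Prod.mk.inj h).1.trans (Prod.mk.inj h).2.symm) hij
  · exact h

theorem swap_shiftDiagonal (p : α × α) : (shiftDiagonal s p).swap = shiftDiagonal s p.swap := by
  by_cases h : p.1 = p.2 <;> simp [shiftDiagonal, h, eq_comm]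

theorem not_injective_shiftDiagonal_fst_row (i : α) (h₁ : s i ≠ i) (h₂ : s (s i) ≠ i)
    (h₃ : s (s i) ≠ s i) : ¬Injective fun j => (shiftDiagonal s (i, j)).1 := fun hinj =>
  h₃ <| hinj (by simp [shiftDiagonal, h₁.symm, h₂.symm])

theorem not_injective_shiftDiagonal_fst_col (j : α) (h : s j ≠ j) :
    ¬Injective fun i => (shiftDiagonal s (i, j)).1 := fun hinj =>
  h <| hinj (by simp [shiftDiagonal, h])

end ShiftDiagonal

theorem isAntiLatin_iff {d : ℕ} (A : ZMod d → ZMod d → ZMod d) :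
    IsAntiLatin A ↔ (∀ i, ¬Injective (A i)) ∧ ∀ j, ¬Injective fun i => A i j := by
  simp only [IsAntiLatin, not_injective_iff, and_comm]

theorem IsAntiLatin.transpose {d : ℕ} {A : ZMod d → ZMod d → ZMod d} (h : IsAntiLatin A) :
    IsAntiLatin fun i j => A j i :=
  ⟨h.2, h.1⟩

theorem ZMod.add_natCast_ne_self {d k : ℕ} (hk : 0 < k) (hkd : k < d) (x : ZMod d) :
    x + k ≠ x := by
  rw [Ne, add_eq_left, ZMod.natCast_eq_zero_iff]
  exact Nat.not_dvd_of_pos_of_lt hk hkd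

/-- For every `d > 2` there exists a pair of `d × d` anti-Latin squares whose
superposition map `(i,j) ↦ (a_{i,j}, b_{i,j})` is injective. -/
theorem exists_injective_antiLatin_pair (d : ℕ) (hd : 2 < d) :
    ∃ a b : ZMod d → ZMod d → ZMod d, IsAntiLatin a ∧ IsAntiLatin b ∧
      Function.Injective (fun ij : ZMod d × ZMod d => (a ij.1 ij.2, b ij.1 ij.2)) := by
  have h₁ (x : ZMod d) : x + 1 ≠ x := by
    exact_mod_cast ZMod.add_natCast_ne_self (k := 1) one_pos (by omega) x
  have h₂ (x : ZMod d) : x + 1 + 1 ≠ x := by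
    rw [add_assoc, one_add_one_eq_two]
    exact_mod_cast ZMod.add_natCast_ne_self (k := 2) two_pos hd x
  set σ := shiftDiagonal (· + 1 : ZMod d → ZMod d)
  have ha : IsAntiLatin fun i j => (σ (i, j)).1 := (isAntiLatin_iff _).2
    ⟨fun i => not_injective_shiftDiagonal_fst_row i (h₁ i) (h₂ i) (h₁ (i + 1)),
      fun j => not_injective_shiftDiagonal_fst_col j (h₁ j)⟩
  have hb : (fun i j => (σ (i, j)).2) = fun i j => (σ (j, i)).1 := by
    ext i j
    exact congrArg Prod.fst (swap_shiftDiagonal (i, j))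
  exact ⟨_, _, ha, hb ▸ ha.transpose, shiftDiagonal_injective (add_left_injective 1)⟩
end

section
/- Let M, L be independent uniform random variables on Z_2 with Y_1 = L, Y_2 = M + L, Y_3 = LM, Y_4 = LM + M (arithmetic in Z_2). Then there is a function f : Z_2 × Z_2 → Z_2 such that f(Y_1, Z) = M with probability 1, where Z = Y_3 if Y_1 = 1 and Z = Y_4 if Y_1 = 0. -/
/-- The adaptive attack on the standard non-linear code over `Z_2`: observing
`Y₁ = L` and then `Z = Y₃ = LM` if `Y₁ = 1`, `Z = Y₄ = LM + M` if `Y₁ = 0`, Eve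
recovers `M` exactly by some function `f`. -/
theorem adaptive_attack_first :
    ∃ f : ZMod 2 → ZMod 2 → ZMod 2,
      ∀ M L : ZMod 2, f L (if L = 1 then L * M else L * M + M) = M := by
  exact ⟨fun _ z => z, by decide⟩
end

section
/- Let M, L_1, L_2, L_3 be independent uniform random variables on Z_d. Define Y_1 = L_1, Y_2 = M + L_1, Y_1' = L_2, Y_2' = L_3 + L_2, Y_3 = Y_2' − Y_1', Y_4 = (Y_2 − Y_1) + (Y_2' − Y_1'). Then Y_4 − Y_3 = M, and each of the pairs (Y_1, Y_3), (Y_1, Y_4), (Y_2, Y_3), (Y_2, Y_4) is independent of M (equivalently, I(M; Y_i, Y_j) = 0 for i ∈ {1,2}, j ∈ {3,4}). -/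
open Finset

/-- Independence of two finite random variables `f`, `g` on a finite probability
space with mass function `p`. -/
def IndepPair {Ω α β : Type*} [Fintype Ω] [DecidableEq α] [DecidableEq β]
    (p : Ω → ℝ) (f : Ω → α) (g : Ω → β) : Prop :=
  ∀ a : α, ∀ b : β,
    (∑ ω : Ω, if f ω = a ∧ g ω = b then p ω else 0) =
      (∑ ω : Ω, if f ω = a then p ω else 0) * (∑ ω : Ω, if g ω = b then p ω else 0)

/-- Vector-linear code over the one-hop relay network: with `(M, L₁, L₂, L₃)`
independent uniform on `Z_d`, `Y₁ = L₁`, `Y₂ = M + L₁`, `Y₁' = L₂`, `Y₂' = L₃ + L₂`,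
`Y₃ = Y₂' - Y₁'`, `Y₄ = (Y₂ - Y₁) + (Y₂' - Y₁')`, we have `Y₄ - Y₃ = M` and each of
the pairs `(Y₁,Y₃), (Y₁,Y₄), (Y₂,Y₃), (Y₂,Y₄)` is independent of `M`. Here the
sample space is `Z_d⁴` with the uniform distribution, `ω = (M, L₁, L₂, L₃)`. -/
theorem vector_linear_code_secure (d : ℕ) [NeZero d]
    (p : ZMod d × ZMod d × ZMod d × ZMod d → ℝ) (hp : ∀ ω, p ω = 1 / (d : ℝ)^4)
    (M Y1 Y2 Y3 Y4 : ZMod d × ZMod d × ZMod d × ZMod d → ZMod d)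
    (hM : ∀ ω, M ω = ω.1)
    (hY1 : ∀ ω, Y1 ω = ω.2.1)
    (hY2 : ∀ ω, Y2 ω = ω.1 + ω.2.1)
    (hY3 : ∀ ω, Y3 ω = (ω.2.2.2 + ω.2.2.1) - ω.2.2.1)
    (hY4 : ∀ ω, Y4 ω = (Y2 ω - Y1 ω) + ((ω.2.2.2 + ω.2.2.1) - ω.2.2.1)) :
    (∀ ω, Y4 ω - Y3 ω = M ω) ∧
    IndepPair p M (fun ω => (Y1 ω, Y3 ω)) ∧
    IndepPair p M (fun ω => (Y1 ω, Y4 ω)) ∧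
    IndepPair p M (fun ω => (Y2 ω, Y3 ω)) ∧
    IndepPair p M (fun ω => (Y2 ω, Y4 ω)) := by
  have hd : (d : ℝ) ≠ 0 := Nat.cast_ne_zero.mpr (NeZero.ne d)
  refine ⟨fun ω => by simp [hY4, hY3, hY2, hY1, hM], ?_, ?_, ?_, ?_⟩ <;>
  · rintro a ⟨b, c⟩
    simp only [hp, hM, hY1, hY2, hY3, hY4, Prod.mk.injEq, add_sub_cancel_right,
      Fintype.sum_prod_type]
    simp [← eq_sub_iff_add_eq', ite_and, Finset.sum_ite_eq', Finset.sum_ite_irrel,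
      Finset.card_univ, ZMod.card]
    field_simp
end

section
/- Let M, L, L' be independent uniform random variables on Z_d. Define Y_1 = L, Y_2 = M + L, Y_3 = L', Y_4 = Y_2 − Y_1 + L'. Then Y_4 − Y_3 = M, and each pair (Y_i, Y_j) with i ∈ {1,2}, j ∈ {3,4} is independent of M. -/
open Finset

/-- Scalar-linear code with an intermediate random number: with `(M, L, L')`
independent uniform on `Z_d`, `Y₁ = L`, `Y₂ = M + L`, `Y₃ = L'`,
`Y₄ = Y₂ - Y₁ + L'`, we have `Y₄ - Y₃ = M` and each pair `(Y_i, Y_j)` with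
`i ∈ {1,2}`, `j ∈ {3,4}` is independent of `M`. The sample space is `Z_d³` with
the uniform distribution, `ω = (M, L, L')`. -/
theorem scalar_linear_code_secure (d : ℕ) [NeZero d]
    (p : ZMod d × ZMod d × ZMod d → ℝ) (hp : ∀ ω, p ω = 1 / (d : ℝ)^3)
    (M Y1 Y2 Y3 Y4 : ZMod d × ZMod d × ZMod d → ZMod d)
    (hM : ∀ ω, M ω = ω.1)
    (hY1 : ∀ ω, Y1 ω = ω.2.1)
    (hY2 : ∀ ω, Y2 ω = ω.1 + ω.2.1)
    (hY3 : ∀ ω, Y3 ω = ω.2.2)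
    (hY4 : ∀ ω, Y4 ω = Y2 ω - Y1 ω + ω.2.2) :
    (∀ ω, Y4 ω - Y3 ω = M ω) ∧
    IndepPair p M (fun ω => (Y1 ω, Y3 ω)) ∧
    IndepPair p M (fun ω => (Y1 ω, Y4 ω)) ∧
    IndepPair p M (fun ω => (Y2 ω, Y3 ω)) ∧
    IndepPair p M (fun ω => (Y2 ω, Y4 ω)) := by
  have hd : (d:ℝ) ≠ 0 := Nat.cast_ne_zero.2 (NeZero.ne d)
  have hY4' : ∀ ω : ZMod d × ZMod d × ZMod d, Y4 ω = ω.1 + ω.2.2 := by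
    intro ω; rw [hY4, hY2, hY1]; ring
  refine ⟨?_, ?_, ?_, ?_, ?_⟩
  · intro ω; rw [hY4', hY3, hM]; ring
  · intro a b
    simp only [hM, hY1, hY3, hp, Prod.ext_iff]
    simp [Fintype.sum_prod_type, ite_and, ZMod.card]
    field_simp; simp [Finset.sum_ite, Finset.filter_eq', ZMod.card]; field_simp
  · intro a b
    simp only [hM, hY1, hY4', hp, Prod.ext_iff]
    simp [Fintype.sum_prod_type, ite_and, ← eq_sub_iff_add_eq', ZMod.card]
    field_simp; simp [Finset.sum_ite, Finset.filter_eq', ZMod.card]; field_simp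
  · intro a b
    simp only [hM, hY2, hY3, hp, Prod.ext_iff]
    simp [Fintype.sum_prod_type, ite_and, ← eq_sub_iff_add_eq', ZMod.card]
    field_simp; simp [Finset.sum_ite, Finset.filter_eq', ZMod.card]; field_simp
  · intro a b
    simp only [hM, hY2, hY4', hp, Prod.ext_iff]
    simp [Fintype.sum_prod_type, ite_and, ← eq_sub_iff_add_eq', ZMod.card]
    field_simp; simp [Finset.sum_ite, Finset.filter_eq', ZMod.card]; field_simp
end

section
/- Let d ≥ 2 and let (a_{i,j}), (b_{i,j}) be d × d anti-Latin squares over Z_d. Let M, L be independent uniform on Z_d, Y_1 = L, Y_2 = M + L, Y_3 = a_{Y_1, Y_2}, Y_4 = b_{Y_1, Y_2}. Then for each i ∈ {1,2} and j ∈ {3,4}, there is no function f : Z_d × Z_d → Z_d with f(Y_i, Y_j) = M almost surely. -/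
section Decoding

variable {G : Type*} [AddGroup G] {A : G → G → G}

theorem not_exists_decoder_row_of_repeat {i j j' : G} (hjj' : j ≠ j') (hA : A i j = A i j') :
    ¬ ∃ f : G → G → G, ∀ M L : G, f L (A L (M + L)) = M := by
  rintro ⟨f, hf⟩
  have hj := hf (j - i) i
  have hj' := hf (j' - i) i
  rw [sub_add_cancel] at hj hj'
  rw [hA, hj'] at hj
  exact hjj' (sub_left_injective hj).symm

theorem not_exists_decoder_col_of_repeat {i i' j : G} (hii' : i ≠ i') (hA : A i j = A i' j) :
    ¬ ∃ f : G → G → G, ∀ M L : G, f (M + L) (A L (M + L)) = M := by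
  rintro ⟨f, hf⟩
  have hi := hf (j - i) i
  have hi' := hf (j - i') i'
  rw [sub_add_cancel] at hi hi'
  rw [hA, hi'] at hi
  exact hii' (sub_right_injective hi).symm

end Decoding

theorem IsAntiLatin.not_exists_decoder_row {d : ℕ} {A : ZMod d → ZMod d → ZMod d}
    (hA : IsAntiLatin A) :
    ¬ ∃ f : ZMod d → ZMod d → ZMod d, ∀ M L : ZMod d, f L (A L (M + L)) = M := by
  obtain ⟨j, j', hjj', hrep⟩ := hA.1 0
  exact not_exists_decoder_row_of_repeat hjj' hrep

theorem IsAntiLatin.not_exists_decoder_col {d : ℕ} {A : ZMod d → ZMod d → ZMod d}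
    (hA : IsAntiLatin A) :
    ¬ ∃ f : ZMod d → ZMod d → ZMod d, ∀ M L : ZMod d, f (M + L) (A L (M + L)) = M := by
  obtain ⟨i, i', hii', hrep⟩ := hA.2 0
  exact not_exists_decoder_col_of_repeat hii' hrep

theorem antiLatin_code_imperfectly_secret_general (d : ℕ)
    (a b : ZMod d → ZMod d → ZMod d) (ha : IsAntiLatin a) (hb : IsAntiLatin b) :
    (¬ ∃ f : ZMod d → ZMod d → ZMod d, ∀ M L : ZMod d, f L (a L (M + L)) = M) ∧
    (¬ ∃ f : ZMod d → ZMod d → ZMod d, ∀ M L : ZMod d, f L (b L (M + L)) = M) ∧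
    (¬ ∃ f : ZMod d → ZMod d → ZMod d, ∀ M L : ZMod d, f (M + L) (a L (M + L)) = M) ∧
    (¬ ∃ f : ZMod d → ZMod d → ZMod d, ∀ M L : ZMod d, f (M + L) (b L (M + L)) = M) :=
  ⟨ha.not_exists_decoder_row, hb.not_exists_decoder_row,
    ha.not_exists_decoder_col, hb.not_exists_decoder_col⟩

/-- Any anti-Latin code is imperfectly secret against deterministic passive
attacks: with `Y₁ = L`, `Y₂ = M + L`, `Y₃ = a_{Y₁,Y₂}`, `Y₄ = b_{Y₁,Y₂}`, for each
`i ∈ {1,2}`, `j ∈ {3,4}` there is no function `f` with `f(Y_i, Y_j) = M` for all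
values of `(M, L)` (i.e. almost surely under the uniform distribution). -/
theorem antiLatin_code_imperfectly_secret (d : ℕ) (hd : 2 ≤ d)
    (a b : ZMod d → ZMod d → ZMod d) (ha : IsAntiLatin a) (hb : IsAntiLatin b) :
    (¬ ∃ f : ZMod d → ZMod d → ZMod d, ∀ M L : ZMod d, f L (a L (M + L)) = M) ∧
    (¬ ∃ f : ZMod d → ZMod d → ZMod d, ∀ M L : ZMod d, f L (b L (M + L)) = M) ∧
    (¬ ∃ f : ZMod d → ZMod d → ZMod d, ∀ M L : ZMod d, f (M + L) (a L (M + L)) = M) ∧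
    (¬ ∃ f : ZMod d → ZMod d → ZMod d, ∀ M L : ZMod d, f (M + L) (b L (M + L)) = M) :=
  antiLatin_code_imperfectly_secret_general d a b ha hb
end
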